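/- arXiv:2105.13203 — 2 statements merged into one kernel-verified Lean document; each statement's English description precedes it below -/
import Mathlib

section
/- Let X ⊆ ℝⁿ be a nonempty convex compact set with κ = max_{x∈X} ‖x‖₂ > 0, let C = cone({κ} × X) ⊆ ℝ^{1+n} with polar cone C° and metric projections π_C, π_{C°}. Let ω_1, …, ω_T > 0 be positive weights with partial sums S_t = Σ_{τ=1}^t ω_τ, and let f_1, …, f_T ∈ ℝⁿ satisfy ‖f_t‖₂ ≤ L. Define the CBA iterates: x_1 ∈ X arbitrary; v_t = (⟨f_t, x_t⟩/κ, −f_t); u_t = (1/S_t) Σ_{τ=1}^t ω_τ v_τ; and for t ≥ 1, writing π_C(u_t) = (p̃_t, p̂_t), x_{t+1} = (κ/p̃_t)·p̂_t if π_C(u_t) ≠ 0 and x_{t+1} is an arbitrary point of X if π_C(u_t) = 0. Then the weighted regret satisfies Σ_{t=1}^T ω_t ⟨f_t, x_t⟩ − min_{x∈X} Σ_{t=1}^T ω_t ⟨f_t, x⟩ ≤ 4κL·√(Σ_{t=1}^T ω_t²). -/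
/-! CBA is Blackwell approachability of the polar cone `C°` by the cumulative payoff
`W_t = ∑_{j ≤ t} ω_j v_j`, whose projection onto `C` is `P_t = S_t π_C(u_t)`. The decision
`x_{t+1}` makes `(κ, x_{t+1})` a positive multiple of `P_t`, and `⟪(κ, x), v(x)⟫ = 0`, so
`⟪P_t, v_{t+1}⟫ = 0`; as `W_t - P_t ∈ C°`, this gives
`‖P_{t+1}‖² ≤ ‖P_t‖² + ω_{t+1}² ‖v_{t+1}‖²`. The regret against `z ∈ X` is then
`⟪(κ, z), W_T⟫ ≤ ⟪(κ, z), P_T⟫ ≤ √2 κ · √2 L (∑ ω_t²)^{1/2}`. -/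

open scoped RealInnerProductSpace
open Finset

noncomputable section

/-- `ℝ^{1+n}`, with its first coordinate a scalar block, as a Euclidean (L2) space. -/
abbrev Rone (n : ℕ) := WithLp 2 (ℝ × EuclideanSpace ℝ (Fin n))

/-- The conic hull `cone({κ} × X) = {α • (κ, x) : α ≥ 0, x ∈ X} ⊆ ℝ^{1+n}`. -/
def coneOf (n : ℕ) (κ : ℝ) (X : Set (EuclideanSpace ℝ (Fin n))) : Set (Rone n) :=
  {z | ∃ a : ℝ, 0 ≤ a ∧ ∃ x ∈ X, z = a • (WithLp.toLp 2 (κ, x) : Rone n)}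

/-- `p` is a nearest point to `u` in `C` (the metric projection of `u` onto `C`). -/
def IsProjOn {H : Type*} [NormedAddCommGroup H] (C : Set H) (u p : H) : Prop :=
  p ∈ C ∧ ∀ w ∈ C, ‖u - p‖ ≤ ‖u - w‖

theorem sqrt_sum_sq_mul_le {ι : Type*} (s : Finset ι) (w c : ι → ℝ) {M : ℝ} (hM : 0 ≤ M)
    (hc : ∀ j ∈ s, c j ≤ M ^ 2) : √(∑ j ∈ s, w j ^ 2 * c j) ≤ M * √(∑ j ∈ s, w j ^ 2) := by
  rw [← Real.sqrt_sq hM, ← Real.sqrt_mul (sq_nonneg M), mul_sum]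
  exact Real.sqrt_le_sqrt (sum_le_sum fun j hj => by rw [mul_comm]; gcongr; exact hc j hj)

theorem sub_sInf_image_le {α : Type*} {X : Set α} (hX : X.Nonempty) {g : α → ℝ} {a b : ℝ}
    (h : ∀ z ∈ X, a - g z ≤ b) : a - sInf (g '' X) ≤ b := by
  rw [sub_le_comm]
  exact le_csInf (hX.image g) (by rintro _ ⟨z, hz, rfl⟩; linarith [h z hz])

namespace IsProjOn

variable {H : Type*} [NormedAddCommGroup H] [InnerProductSpace ℝ H]

theorem inner_sub_le_zero {C : Set H} (hC : Convex ℝ C) {u p w : H} (h : IsProjOn C u p)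
    (hw : w ∈ C) : ⟪u - p, w - p⟫ ≤ 0 := by
  have : Nonempty C := ⟨⟨p, h.1⟩⟩
  refine (norm_eq_iInf_iff_real_inner_le_zero hC h.1).1 ?_ w hw
  exact le_antisymm (le_ciInf fun w => h.2 w w.2)
    (ciInf_le (f := fun w : C => ‖u - w‖) ⟨0, by rintro _ ⟨w, rfl⟩; exact norm_nonneg _⟩ ⟨p, h.1⟩)

variable {K : PointedCone ℝ H} {u p : H}

theorem inner_le_zero_of_mem (h : IsProjOn K u p) {w : H} (hw : w ∈ K) : ⟪u - p, w⟫ ≤ 0 := by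
  simpa using h.inner_sub_le_zero K.convex (K.add_mem h.1 hw)

theorem inner_sub_self_eq_zero (h : IsProjOn K u p) : ⟪u - p, p⟫ = 0 := by
  have h0 := h.inner_sub_le_zero K.convex K.zero_mem
  rw [zero_sub, inner_neg_right] at h0
  linarith [h.inner_le_zero_of_mem h.1]

theorem inner_le_inner_of_mem (h : IsProjOn K u p) {w : H} (hw : w ∈ K) : ⟪w, u⟫ ≤ ⟪w, p⟫ := by
  have := h.inner_le_zero_of_mem hw
  rw [inner_sub_left, real_inner_comm w u, real_inner_comm w p] at this
  linarith

theorem norm_sq_le_norm_sub_sq (h : IsProjOn K u p) {q : H} (hq : ⟪p, q⟫ ≤ 0) :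
    ‖p‖ ^ 2 ≤ ‖u - q‖ ^ 2 := by
  have hpu : ⟪p, u - p⟫ = 0 := by rw [real_inner_comm]; exact h.inner_sub_self_eq_zero
  calc ‖p‖ ^ 2 ≤ ‖p‖ ^ 2 + 2 * ⟪p, u - p - q⟫ + ‖u - p - q‖ ^ 2 := by
        rw [inner_sub_right, hpu]; nlinarith [sq_nonneg ‖u - p - q‖]
    _ = ‖u - q‖ ^ 2 := by rw [← norm_add_sq_real]; congr 2; abel

theorem smul (h : IsProjOn K u p) {c : ℝ} (hc : 0 < c) : IsProjOn K (c • u) (c • p) := by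
  refine ⟨K.smul_mem hc.le h.1, fun w hw => ?_⟩
  calc ‖c • u - c • p‖ = c * ‖u - p‖ := by rw [← smul_sub, norm_smul_of_nonneg hc.le]
    _ ≤ c * ‖u - c⁻¹ • w‖ := by gcongr; exact h.2 _ (K.smul_mem (inv_nonneg.2 hc.le) hw)
    _ = ‖c • u - w‖ := by rw [← norm_smul_of_nonneg hc.le, smul_sub, smul_inv_smul₀ hc.ne']

end IsProjOn

section BlackwellCone

variable {H : Type*} [NormedAddCommGroup H] [InnerProductSpace ℝ H] {K : PointedCone ℝ H}

theorem norm_sq_le_sum_norm_sq_of_isProjOn {a P : ℕ → H} {t : ℕ}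
    (hP : ∀ s ≤ t, IsProjOn K (∑ j ∈ range (s + 1), a j) (P s))
    (horth : ∀ s < t, ⟪P s, a (s + 1)⟫ = 0) :
    ‖P t‖ ^ 2 ≤ ∑ j ∈ range (t + 1), ‖a j‖ ^ 2 := by
  induction t with
  | zero => simpa using (hP 0 le_rfl).norm_sq_le_norm_sub_sq (q := 0) (by simp)
  | succ t ih =>
    have hPt := hP t t.le_succ
    have hPt1 := hP (t + 1) le_rfl
    have hpolar : ⟪P (t + 1), ∑ j ∈ range (t + 1), a j - P t⟫ ≤ 0 := by
      rw [real_inner_comm]; exact hPt.inner_le_zero_of_mem hPt1.1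
    calc ‖P (t + 1)‖ ^ 2
        ≤ ‖∑ j ∈ range (t + 2), a j - (∑ j ∈ range (t + 1), a j - P t)‖ ^ 2 :=
          hPt1.norm_sq_le_norm_sub_sq hpolar
      _ = ‖P t + a (t + 1)‖ ^ 2 := by rw [sum_range_succ _ (t + 1)]; congr 2; abel
      _ = ‖P t‖ ^ 2 + ‖a (t + 1)‖ ^ 2 := by
          rw [norm_add_sq_real, horth t t.lt_succ_self]; ring
      _ ≤ ∑ j ∈ range (t + 2), ‖a j‖ ^ 2 := by
          rw [sum_range_succ _ (t + 1)]
          gcongr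
          exact ih (fun s hs => hP s (by omega)) (fun s hs => horth s (by omega))

theorem inner_sum_smul_le_of_isProjOn {ω : ℕ → ℝ} {v p : ℕ → H} {N : ℕ}
    (hω : ∀ t ≤ N, 0 < ω t)
    (hp : ∀ t ≤ N, IsProjOn K
      ((∑ j ∈ range (t + 1), ω j)⁻¹ • ∑ j ∈ range (t + 1), ω j • v j) (p t))
    (horth : ∀ t < N, ⟪p t, v (t + 1)⟫ = 0) {w : H} (hw : w ∈ K) :
    ⟪w, ∑ j ∈ range (N + 1), ω j • v j⟫
      ≤ ‖w‖ * √(∑ j ∈ range (N + 1), ω j ^ 2 * ‖v j‖ ^ 2) := by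
  have hS : ∀ t ≤ N, 0 < ∑ j ∈ range (t + 1), ω j := fun t ht =>
    sum_pos (fun j hj => hω j (by rw [mem_range] at hj; omega)) nonempty_range_add_one
  have hP : ∀ t ≤ N, IsProjOn K (∑ j ∈ range (t + 1), ω j • v j)
      ((∑ j ∈ range (t + 1), ω j) • p t) := fun t ht => by
    simpa only [smul_inv_smul₀ (hS t ht).ne'] using (hp t ht).smul (hS t ht)
  have hsq := norm_sq_le_sum_norm_sq_of_isProjOn hP fun t ht => by
    rw [real_inner_smul_left, real_inner_smul_right, horth t ht, mul_zero, mul_zero]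
  calc ⟪w, ∑ j ∈ range (N + 1), ω j • v j⟫
      ≤ ⟪w, (∑ j ∈ range (N + 1), ω j) • p N⟫ := (hP N le_rfl).inner_le_inner_of_mem hw
    _ ≤ ‖w‖ * ‖(∑ j ∈ range (N + 1), ω j) • p N‖ := real_inner_le_norm _ _
    _ ≤ ‖w‖ * √(∑ j ∈ range (N + 1), ‖ω j • v j‖ ^ 2) := by
        gcongr; exact Real.le_sqrt_of_sq_le hsq
    _ = ‖w‖ * √(∑ j ∈ range (N + 1), ω j ^ 2 * ‖v j‖ ^ 2) := by
        simp only [norm_smul, mul_pow, Real.norm_eq_abs, sq_abs]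

end BlackwellCone

namespace Rone

variable {n : ℕ}

theorem inner_def (z w : Rone n) : ⟪z, w⟫ = z.ofLp.1 * w.ofLp.1 + ⟪z.ofLp.2, w.ofLp.2⟫ := by
  rw [WithLp.prod_inner_apply]
  simp only [RCLike.inner_apply, conj_trivial]
  ring

theorem norm_sq (z : Rone n) : ‖z‖ ^ 2 = z.ofLp.1 ^ 2 + ‖z.ofLp.2‖ ^ 2 := by
  rw [WithLp.prod_norm_sq_eq_of_L2, Real.norm_eq_abs, sq_abs]
  rfl

theorem norm_toLp_le {κ : ℝ} {z : EuclideanSpace ℝ (Fin n)} (hz : ‖z‖ ≤ κ) :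
    ‖(WithLp.toLp 2 (κ, z) : Rone n)‖ ≤ √2 * κ := by
  have hκ : 0 ≤ κ := (norm_nonneg z).trans hz
  rw [show √2 * κ = √(2 * κ ^ 2) by rw [Real.sqrt_mul zero_le_two, Real.sqrt_sq hκ]]
  refine Real.le_sqrt_of_sq_le ?_
  rw [norm_sq]
  change κ ^ 2 + ‖z‖ ^ 2 ≤ 2 * κ ^ 2
  nlinarith [norm_nonneg z]

end Rone

section Payoff

variable {n : ℕ}

def payoff (κ : ℝ) (f x : EuclideanSpace ℝ (Fin n)) : Rone n :=
  WithLp.toLp 2 (⟪f, x⟫ / κ, -f)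

theorem inner_toLp_payoff {κ : ℝ} (hκ : κ ≠ 0) (f x z : EuclideanSpace ℝ (Fin n)) :
    ⟪(WithLp.toLp 2 (κ, z) : Rone n), payoff κ f x⟫ = ⟪f, x⟫ - ⟪f, z⟫ := by
  rw [Rone.inner_def]
  simp only [payoff, inner_neg_right, real_inner_comm z]
  field_simp
  ring

theorem norm_payoff_sq_le {κ : ℝ} (hκ : 0 < κ) (f : EuclideanSpace ℝ (Fin n))
    {x : EuclideanSpace ℝ (Fin n)} (hx : ‖x‖ ≤ κ) : ‖payoff κ f x‖ ^ 2 ≤ 2 * ‖f‖ ^ 2 := by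
  have hfst : |⟪f, x⟫ / κ| ≤ ‖f‖ := by
    rw [abs_div, abs_of_pos hκ, div_le_iff₀ hκ]
    exact (abs_real_inner_le_norm f x).trans (mul_le_mul_of_nonneg_left hx (norm_nonneg f))
  have := sq_le_sq.2 (hfst.trans (le_abs_self _))
  rw [Rone.norm_sq]
  simp only [payoff, norm_neg]
  linarith

theorem inner_toLp_sum_smul_payoff {ι : Type*} {κ : ℝ} (hκ : κ ≠ 0) (s : Finset ι) (ω : ι → ℝ)
    (f x : ι → EuclideanSpace ℝ (Fin n)) (z : EuclideanSpace ℝ (Fin n)) :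
    ⟪(WithLp.toLp 2 (κ, z) : Rone n), ∑ j ∈ s, ω j • payoff κ (f j) (x j)⟫
      = ∑ j ∈ s, ω j * ⟪f j, x j⟫ - ∑ j ∈ s, ω j * ⟪f j, z⟫ := by
  simp only [inner_sum, real_inner_smul_right, inner_toLp_payoff hκ, mul_sub, sum_sub_distrib]

theorem inner_payoff_rescale_eq_zero {κ : ℝ} (hκ : κ ≠ 0) {X : Set (EuclideanSpace ℝ (Fin n))}
    {p : Rone n} (hp : p ∈ coneOf n κ X) (hp0 : p ≠ 0) (f : EuclideanSpace ℝ (Fin n)) :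
    ⟪p, payoff κ f ((κ / p.ofLp.1) • p.ofLp.2)⟫ = 0 := by
  obtain ⟨a, -, y, -, rfl⟩ := hp
  have ha : a ≠ 0 := by rintro rfl; exact hp0 (zero_smul _ _)
  have hy : (κ / (a • (WithLp.toLp 2 (κ, y) : Rone n)).ofLp.1)
      • (a • (WithLp.toLp 2 (κ, y) : Rone n)).ofLp.2 = y := by
    change (κ / (a * κ)) • a • y = y
    rw [smul_smul, div_mul_cancel_right₀ hκ, inv_mul_cancel₀ ha, one_smul]
  rw [hy, real_inner_smul_left, inner_toLp_payoff hκ, sub_self, mul_zero]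

end Payoff

section Cone

variable {n : ℕ} {κ : ℝ} {X : Set (EuclideanSpace ℝ (Fin n))}

theorem add_mem_coneOf (hX : Convex ℝ X) {z w : Rone n} (hz : z ∈ coneOf n κ X)
    (hw : w ∈ coneOf n κ X) : z + w ∈ coneOf n κ X := by
  obtain ⟨a, ha, y, hy, rfl⟩ := hz
  obtain ⟨b, hb, y', hy', rfl⟩ := hw
  rcases (add_nonneg ha hb).eq_or_lt with hab | hab
  · obtain ⟨rfl, rfl⟩ : a = 0 ∧ b = 0 := ⟨by linarith, by linarith⟩
    exact ⟨0, le_rfl, y, hy, by simp⟩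
  refine ⟨a + b, hab.le, (a / (a + b)) • y + (b / (a + b)) • y',
    hX hy hy' (by positivity) (by positivity) (by field_simp), ?_⟩
  apply WithLp.ofLp_injective
  refine Prod.ext (show a * κ + b * κ = (a + b) * κ by ring) ?_
  change a • y + b • y' = (a + b) • ((a / (a + b)) • y + (b / (a + b)) • y')
  rw [smul_add, smul_smul, smul_smul, mul_div_cancel₀ _ hab.ne', mul_div_cancel₀ _ hab.ne']

variable (n κ) in
def coneOfPointedCone (hne : X.Nonempty) (hX : Convex ℝ X) : PointedCone ℝ (Rone n) where
  carrier := coneOf n κ X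
  zero_mem' := ⟨0, le_rfl, hne.some, hne.some_mem, (zero_smul _ _).symm⟩
  add_mem' := add_mem_coneOf hX
  smul_mem' := by
    rintro ⟨c, hc⟩ _ ⟨a, ha, y, hy, rfl⟩
    exact ⟨c * a, mul_nonneg hc ha, y, hy, (mul_smul c a _).symm⟩

end Cone

/-- Rounds are indexed from `0`: `u t` averages `v 0, …, v t`, and `x (t + 1)` is played from
`p t = π_C(u t)`. -/
theorem cba_weighted_regret_general (n T : ℕ)
    (X : Set (EuclideanSpace ℝ (Fin n)))
    (hXconv : Convex ℝ X)
    (κ L : ℝ) (hκ : IsGreatest ((fun x => ‖x‖) '' X) κ) (hκpos : 0 < κ)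
    (ω : ℕ → ℝ) (hω : ∀ t < T, 0 < ω t)
    (f x : ℕ → EuclideanSpace ℝ (Fin n))
    (hL : ∀ t < T, ‖f t‖ ≤ L)
    (hxmem : ∀ t < T, x t ∈ X)
    (v u p : ℕ → Rone n)
    (hv : ∀ t < T, v t = (WithLp.toLp 2 (⟪f t, x t⟫ / κ, -f t) : Rone n))
    (hu : ∀ t < T, u t = (∑ j ∈ Finset.range (t + 1), ω j)⁻¹ •
      ∑ j ∈ Finset.range (t + 1), ω j • v j)
    (hp : ∀ t < T, IsProjOn (coneOf n κ X) (u t) (p t))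
    (hxplay : ∀ t : ℕ, t + 1 < T → p t ≠ 0 →
      x (t + 1) = (κ / (p t).ofLp.1) • (p t).ofLp.2) :
    (∑ t ∈ Finset.range T, ω t * ⟪f t, x t⟫)
        - sInf ((fun z => ∑ t ∈ Finset.range T, ω t * ⟪f t, z⟫) '' X)
      ≤ 4 * κ * L * Real.sqrt (∑ t ∈ Finset.range T, ω t ^ 2) := by
  obtain rfl | ⟨N, rfl⟩ : T = 0 ∨ ∃ N, T = N + 1 := by cases T <;> simp
  · simp only [range_zero, sum_empty, zero_sub, Real.sqrt_zero, mul_zero, neg_nonpos]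
    exact Real.sInf_nonneg (by rintro _ ⟨z, -, rfl⟩; rfl)
  have hXne : X.Nonempty := ⟨x 0, hxmem 0 N.succ_pos⟩
  have hκX : ∀ z ∈ X, ‖z‖ ≤ κ := fun z hz => hκ.2 ⟨z, hz, rfl⟩
  have hL0 : 0 ≤ L := (norm_nonneg _).trans (hL 0 N.succ_pos)
  set B := √(∑ t ∈ range (N + 1), ω t ^ 2)
  have horth : ∀ t < N, ⟪p t, v (t + 1)⟫ = 0 := fun t ht => by
    rcases eq_or_ne (p t) 0 with h0 | h0
    · rw [h0, inner_zero_left]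
    rw [hv _ (by omega), hxplay t (by omega) h0]
    exact inner_payoff_rescale_eq_zero hκpos.ne' (hp t (by omega)).1 h0 _
  have hvB : √(∑ j ∈ range (N + 1), ω j ^ 2 * ‖v j‖ ^ 2) ≤ √2 * L * B := by
    refine sqrt_sum_sq_mul_le _ _ _ (by positivity) fun j hj => ?_
    rw [mul_pow, Real.sq_sqrt zero_le_two, hv j (mem_range.1 hj)]
    exact (norm_payoff_sq_le hκpos _ (hκX _ (hxmem j (mem_range.1 hj)))).trans
      (by gcongr; exact hL j (mem_range.1 hj))
  have hsum : ∑ j ∈ range (N + 1), ω j • v j = ∑ j ∈ range (N + 1), ω j • payoff κ (f j) (x j) :=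
    sum_congr rfl fun j hj => by rw [hv j (mem_range.1 hj)]; rfl
  refine sub_sInf_image_le hXne fun z hz => ?_
  calc _ = ⟪(WithLp.toLp 2 (κ, z) : Rone n), ∑ j ∈ range (N + 1), ω j • v j⟫ := by
        rw [hsum, inner_toLp_sum_smul_payoff hκpos.ne']
    _ ≤ ‖(WithLp.toLp 2 (κ, z) : Rone n)‖ * (√2 * L * B) :=
        (inner_sum_smul_le_of_isProjOn (K := coneOfPointedCone n κ hXne hXconv)
          (fun t ht => hω t (by omega)) (fun t ht => (hu t (by omega)) ▸ hp t (by omega)) horth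
          ⟨1, zero_le_one, z, hz, (one_smul _ _).symm⟩).trans (by gcongr)
    _ ≤ (√2 * κ) * (√2 * L * B) := by gcongr; exact Rone.norm_toLp_le (hκX z hz)
    _ = 2 * κ * L * B := by linear_combination κ * L * B * Real.mul_self_sqrt zero_le_two
    _ ≤ 4 * κ * L * B := by gcongr; norm_num

/-- Theorem A.2 of the paper: CBA with weighted averaging on both decisions
and payoffs: the `ω`-weighted regret is at most `4κL·√(Σ_t ω_t²)`.  Sequences are indexed
from `0`, so index `t ∈ {0, …, T−1}` is round `t+1`; `u t` is the `ω`-weighted average of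
the payoffs `v 0, …, v t` (no projection), and the decision `x (t+1)` is obtained by
rescaling `π_C(u t) = p t` to first coordinate `κ`. -/
theorem cba_weighted_regret (n T : ℕ) (hT : 1 ≤ T)
    (X : Set (EuclideanSpace ℝ (Fin n)))
    (hXne : X.Nonempty) (hXconv : Convex ℝ X) (hXcomp : IsCompact X)
    (κ L : ℝ) (hκ : IsGreatest ((fun x => ‖x‖) '' X) κ) (hκpos : 0 < κ)
    (ω : ℕ → ℝ) (hω : ∀ t < T, 0 < ω t)
    (f x : ℕ → EuclideanSpace ℝ (Fin n))
    (hL : ∀ t < T, ‖f t‖ ≤ L)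
    (hxmem : ∀ t < T, x t ∈ X)
    (v u p : ℕ → Rone n)
    (hv : ∀ t < T, v t = (WithLp.toLp 2 (⟪f t, x t⟫ / κ, -f t) : Rone n))
    (hu : ∀ t < T, u t = (∑ j ∈ Finset.range (t + 1), ω j)⁻¹ •
      ∑ j ∈ Finset.range (t + 1), ω j • v j)
    (hp : ∀ t < T, IsProjOn (coneOf n κ X) (u t) (p t))
    (hxplay : ∀ t : ℕ, t + 1 < T → p t ≠ 0 →
      x (t + 1) = (κ / (p t).ofLp.1) • (p t).ofLp.2) :
    (∑ t ∈ Finset.range T, ω t * ⟪f t, x t⟫)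
        - sInf ((fun z => ∑ t ∈ Finset.range T, ω t * ⟪f t, z⟫) '' X)
      ≤ 4 * κ * L * Real.sqrt (∑ t ∈ Finset.range T, ω t ^ 2) :=
  cba_weighted_regret_general n T X hXconv κ L hκ hκpos ω hω f x hL hxmem v u p hv hu hp hxplay
end
end

section
/- Let C ⊆ ℝ^{1+n} be a nonempty closed convex cone with polar cone C° and metric projection π_C. Let (v_t)_{t≥1} ⊆ ℝ^{1+n} be any sequence, let ω_1, ω_2, … > 0 with partial sums S_t = Σ_{τ=1}^t ω_τ, and define the CBA⁺ aggregates u_1 = π_C(v_1) and u_{t+1} = π_C( (S_t·u_t + ω_{t+1}·v_{t+1}) / S_{t+1} ) for t ≥ 1, and the true weighted averages R_t = (1/S_t) Σ_{τ=1}^t ω_τ v_τ. Then for every t ≥ 1, R_t − u_t ∈ C°, i.e., u_t ≤_{C°} R_t; consequently dist(R_t, C°) ≤ ‖u_t‖. -/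
/-!
The residual of a projection onto a convex cone lies in the polar cone. Since the true averages
obey the same recursion `R_{t+1} = (S_t R_t + ω_{t+1} v_{t+1}) / S_{t+1}` as the aggregates before
projection, `R_{t+1} - u_{t+1}` is the residual of the `(t+1)`-st projection plus the nonnegative
multiple `(S_t / S_{t+1}) (R_t - u_t)`; the polar cone is a convex cone, so induction on `t` gives
`R_t - u_t ∈ C°`, and `dist(R_t, C°) ≤ ‖R_t - (R_t - u_t)‖ = ‖u_t‖`.
-/

open scoped RealInnerProductSpace
open Finset

noncomputable section

section Polar

variable {H : Type*} [NormedAddCommGroup H] [InnerProductSpace ℝ H]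

def polarCone (C : Set H) : Set H := {z | ∀ w ∈ C, ⟪z, w⟫ ≤ 0}

lemma add_smul_mem_polarCone {C : Set H} {a b : H} (ha : a ∈ polarCone C)
    (hb : b ∈ polarCone C) {c : ℝ} (hc : 0 ≤ c) : a + c • b ∈ polarCone C := fun w hw => by
  rw [inner_add_left, real_inner_smul_left]
  exact add_nonpos (ha w hw) (mul_nonpos_of_nonneg_of_nonpos hc (hb w hw))

lemma IsProjOn.inner_sub_le_zero_s18 {C : Set H} (hconv : Convex ℝ C) {x p w : H}
    (h : IsProjOn C x p) (hw : w ∈ C) : ⟪x - p, w - p⟫ ≤ 0 := by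
  have : Nonempty C := ⟨⟨p, h.1⟩⟩
  have hinf : ‖x - p‖ = ⨅ w : C, ‖x - w‖ :=
    le_antisymm (le_ciInf fun w => h.2 w w.2)
      (ciInf_le ⟨0, by rintro _ ⟨w, rfl⟩; exact norm_nonneg (x - w)⟩ (⟨p, h.1⟩ : C))
  exact (norm_eq_iInf_iff_real_inner_le_zero hconv h.1).mp hinf w hw

lemma add_mem_of_convex_of_smul_mem {C : Set H} (hconv : Convex ℝ C)
    (hcone : ∀ c : ℝ, 0 ≤ c → ∀ z ∈ C, c • z ∈ C) {p w : H} (hp : p ∈ C) (hw : w ∈ C) :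
    p + w ∈ C := by
  have hmid := hconv hp hw one_half_pos.le one_half_pos.le (add_halves (1 : ℝ))
  convert hcone 2 zero_le_two _ hmid using 1
  module

lemma IsProjOn.sub_mem_polarCone {C : Set H} (hconv : Convex ℝ C)
    (hcone : ∀ c : ℝ, 0 ≤ c → ∀ z ∈ C, c • z ∈ C) {x p : H} (h : IsProjOn C x p) :
    x - p ∈ polarCone C := fun w hw => by
  simpa using h.inner_sub_le_zero_s18 hconv (add_mem_of_convex_of_smul_mem hconv hcone h.1 hw)

lemma IsProjOn.smul_add_sub_mem_polarCone {C : Set H} (hconv : Convex ℝ C)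
    (hcone : ∀ c : ℝ, 0 ≤ c → ∀ z ∈ C, c • z ∈ C) {a b c : ℝ} (hca : 0 ≤ c * a) {u v r p : H}
    (h : IsProjOn C (c • (a • u + b • v)) p) (hr : r - u ∈ polarCone C) :
    c • (a • r + b • v) - p ∈ polarCone C := by
  have hsplit : c • (a • r + b • v) - p = (c • (a • u + b • v) - p) + (c * a) • (r - u) := by
    module
  rw [hsplit]
  exact add_smul_mem_polarCone (h.sub_mem_polarCone hconv hcone) hr hca

end Polar

section WeightedAverage

variable {E : Type*} [AddCommGroup E] [Module ℝ E]

def weightedAverage (ω : ℕ → ℝ) (v : ℕ → E) (t : ℕ) : E :=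
  (∑ j ∈ range (t + 1), ω j)⁻¹ • ∑ j ∈ range (t + 1), ω j • v j

lemma weightedAverage_zero {ω : ℕ → ℝ} (v : ℕ → E) (h : ω 0 ≠ 0) :
    weightedAverage ω v 0 = v 0 := by
  simp [weightedAverage, inv_smul_smul₀ h]

lemma weightedAverage_succ {ω : ℕ → ℝ} (v : ℕ → E) {t : ℕ} (h : ∑ j ∈ range (t + 1), ω j ≠ 0) :
    weightedAverage ω v (t + 1) = (∑ j ∈ range (t + 2), ω j)⁻¹ •
      ((∑ j ∈ range (t + 1), ω j) • weightedAverage ω v t + ω (t + 1) • v (t + 1)) := by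
  rw [weightedAverage, weightedAverage, smul_inv_smul₀ h,
    sum_range_succ (fun j => ω j • v j) (t + 1)]

end WeightedAverage

lemma Metric.infDist_le_norm_of_sub_mem {E : Type*} [SeminormedAddCommGroup E] {s : Set E}
    {x u : E} (h : x - u ∈ s) : Metric.infDist x s ≤ ‖u‖ := by
  simpa [dist_eq_norm] using Metric.infDist_le_dist_of_mem (x := x) h

theorem cbaPlus_aggregate_dominates_average_general (n : ℕ) (C : Set (Rone n))
    (hconv : Convex ℝ C)
    (hcone : ∀ c : ℝ, 0 ≤ c → ∀ z ∈ C, c • z ∈ C)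
    (ω : ℕ → ℝ) (hω : ∀ t, 0 < ω t)
    (v u R : ℕ → Rone n)
    (hu0 : IsProjOn C (v 0) (u 0))
    (hurec : ∀ t : ℕ,
      IsProjOn C
        ((∑ j ∈ Finset.range (t + 2), ω j)⁻¹ •
          ((∑ j ∈ Finset.range (t + 1), ω j) • u t + ω (t + 1) • v (t + 1)))
        (u (t + 1)))
    (hR : ∀ t : ℕ, R t = (∑ j ∈ Finset.range (t + 1), ω j)⁻¹ •
      ∑ j ∈ Finset.range (t + 1), ω j • v j) :
    ∀ t : ℕ,
      R t - u t ∈ {z : Rone n | ∀ w ∈ C, ⟪z, w⟫ ≤ 0} ∧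
      Metric.infDist (R t) {z : Rone n | ∀ w ∈ C, ⟪z, w⟫ ≤ 0} ≤ ‖u t‖ := by
  have hS : ∀ t, 0 < ∑ j ∈ range (t + 1), ω j := fun t =>
    sum_pos (fun j _ => hω j) nonempty_range_add_one
  obtain rfl : R = weightedAverage ω v := funext hR
  have hdom : ∀ t, weightedAverage ω v t - u t ∈ polarCone C := by
    intro t
    induction t with
    | zero =>
      rw [weightedAverage_zero v (hω 0).ne']
      exact hu0.sub_mem_polarCone hconv hcone
    | succ t ih =>
      rw [weightedAverage_succ v (hS t).ne']
      exact (hurec t).smul_add_sub_mem_polarCone hconv hcone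
        (mul_nonneg (inv_nonneg.2 (hS (t + 1)).le) (hS t).le) ih
  exact fun t => ⟨hdom t, Metric.infDist_le_norm_of_sub_mem (hdom t)⟩

/-- the projected aggregate `u` of CBA⁺ with weights `ω` dominates the true
weighted average payoff `R` in the order induced by the polar cone `C°`:
`R_t − u_t ∈ C°` for every `t`, and consequently `dist(R_t, C°) ≤ ‖u_t‖`.
Sequences are indexed from `0` (index `t` is round `t+1`). -/
theorem cbaPlus_aggregate_dominates_average (n : ℕ) (C : Set (Rone n))
    (hne : C.Nonempty) (hclosed : IsClosed C) (hconv : Convex ℝ C)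
    (hcone : ∀ c : ℝ, 0 ≤ c → ∀ z ∈ C, c • z ∈ C)
    (ω : ℕ → ℝ) (hω : ∀ t, 0 < ω t)
    (v u R : ℕ → Rone n)
    (hu0 : IsProjOn C (v 0) (u 0))
    (hurec : ∀ t : ℕ,
      IsProjOn C
        ((∑ j ∈ Finset.range (t + 2), ω j)⁻¹ •
          ((∑ j ∈ Finset.range (t + 1), ω j) • u t + ω (t + 1) • v (t + 1)))
        (u (t + 1)))
    (hR : ∀ t : ℕ, R t = (∑ j ∈ Finset.range (t + 1), ω j)⁻¹ •
      ∑ j ∈ Finset.range (t + 1), ω j • v j) :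
    ∀ t : ℕ,
      R t - u t ∈ {z : Rone n | ∀ w ∈ C, ⟪z, w⟫ ≤ 0} ∧
      Metric.infDist (R t) {z : Rone n | ∀ w ∈ C, ⟪z, w⟫ ≤ 0} ≤ ‖u t‖ :=
  cbaPlus_aggregate_dominates_average_general n C hconv hcone ω hω v u R hu0 hurec hR
end
end
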